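/- arXiv:2411.14889 — 2 statements merged into one kernel-verified Lean document; each statement's English description precedes it below -/
import Mathlib

section
/- If G ≠ K_4 is a connected, claw-free, cubic graph with u(G) units in its triangle-diamond partition, then u(G) + 1 ≤ σ_{(2,1)}(G) ≤ u(G) + 2. -/
open SimpleGraph Set

variable {V : Type*}

/-- One step of the (p,q)-spreading color change rule: a white vertex `w` with at least `p`
blue neighbors, at least one of which has at most `q` white neighbors, becomes blue. -/
def spreadStep (G : SimpleGraph V) (p : ℕ) (q : ℕ∞) (B : Set V) : Set V :=
  B ∪ {w | p ≤ (G.neighborSet w ∩ B).ncard ∧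
      ∃ u ∈ G.neighborSet w ∩ B, ((G.neighborSet u \ B).ncard : ℕ∞) ≤ q}

/-- `S` is a (p,q)-spreading set if iterating the rule eventually colors all vertices blue. -/
def IsSpreadingSet (G : SimpleGraph V) (p : ℕ) (q : ℕ∞) (S : Set V) : Prop :=
  ∃ n : ℕ, (spreadStep G p q)^[n] S = Set.univ

/-- The (p,q)-spreading number σ_{(p,q)}(G). -/
noncomputable def spreadNumber (G : SimpleGraph V) (p : ℕ) (q : ℕ∞) : ℕ :=
  sInf {k | ∃ S : Set V, S.ncard = k ∧ IsSpreadingSet G p q S}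

/-- One step of r-neighbor bootstrap percolation. -/
def percStep (G : SimpleGraph V) (r : ℕ) (B : Set V) : Set V :=
  B ∪ {w | r ≤ (G.neighborSet w ∩ B).ncard}

/-- `S` is an r-percolating set of `G`. -/
def IsPercolating (G : SimpleGraph V) (r : ℕ) (S : Set V) : Prop :=
  ∃ n : ℕ, (percStep G r)^[n] S = Set.univ

/-- The r-percolation number m(G,r). -/
noncomputable def percNumber (G : SimpleGraph V) (r : ℕ) : ℕ :=
  sInf {k | ∃ S : Set V, S.ncard = k ∧ IsPercolating G r S}

/-- A vertex cover of `G`. -/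
def IsVertexCover (G : SimpleGraph V) (C : Set V) : Prop :=
  ∀ ⦃u v : V⦄, G.Adj u v → u ∈ C ∨ v ∈ C

/-- The vertex cover number β(G). -/
noncomputable def coverNumber (G : SimpleGraph V) : ℕ :=
  sInf {k | ∃ C : Set V, C.ncard = k ∧ _root_.IsVertexCover G C}

/-- An independent set of `G`. -/
def IsIndep (G : SimpleGraph V) (I : Set V) : Prop :=
  I.Pairwise fun u v => ¬ G.Adj u v

/-- The independence number α(G). -/
noncomputable def indepNumber (G : SimpleGraph V) : ℕ :=
  sSup {k | ∃ I : Set V, I.ncard = k ∧ IsIndep G I}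

/-- `G` has no induced `K_{1,3}`. -/
def ClawFree (G : SimpleGraph V) : Prop :=
  ¬ ∃ v a b c : V, a ≠ b ∧ a ≠ c ∧ b ≠ c ∧
    G.Adj v a ∧ G.Adj v b ∧ G.Adj v c ∧ ¬ G.Adj a b ∧ ¬ G.Adj a c ∧ ¬ G.Adj b c

/-- The set `T` is (the vertex set of) a triangle of `G`. -/
def IsTriangle (G : SimpleGraph V) (T : Set V) : Prop :=
  ∃ a b c : V, a ≠ b ∧ a ≠ c ∧ b ≠ c ∧
    G.Adj a b ∧ G.Adj a c ∧ G.Adj b c ∧ T = {a, b, c}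

/-- The set `D` induces a diamond (`K_4` minus the edge `ab`) in `G`. -/
def IsDiamond (G : SimpleGraph V) (D : Set V) : Prop :=
  ∃ a b c d : V, a ≠ b ∧ a ≠ c ∧ a ≠ d ∧ b ≠ c ∧ b ≠ d ∧ c ≠ d ∧
    ¬ G.Adj a b ∧ G.Adj a c ∧ G.Adj a d ∧ G.Adj b c ∧ G.Adj b d ∧ G.Adj c d ∧
    D = {a, b, c, d}

/-- `P` is a partition of the vertex set of `G` into sets each inducing a triangle
or a diamond (a triangle-diamond partition). -/
def IsTDPartition (G : SimpleGraph V) (P : Set (Set V)) : Prop :=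
  (∀ S ∈ P, IsTriangle G S ∨ IsDiamond G S) ∧ ∀ v : V, ∃! S : Set V, S ∈ P ∧ v ∈ S

/-- The diamond-necklace `N_k`: the vertex `(i, 0)` is `a_i`, `(i, 1)` is `b_i`,
`(i, 2)` is `c_i`, `(i, 3)` is `d_i`; inside each diamond all edges except `a_i b_i`
are present, and consecutive diamonds are linked by the edges `a_i b_{i+1}`. -/
def diamondNecklace (k : ℕ) : SimpleGraph (ZMod k × Fin 4) :=
  SimpleGraph.fromRel (fun x y =>
    (x.1 = y.1 ∧ ¬ (x.2 = 0 ∧ y.2 = 1) ∧ ¬ (x.2 = 1 ∧ y.2 = 0))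
    ∨ (y.1 = x.1 + 1 ∧ x.2 = 0 ∧ y.2 = 1))

/-- The triangle-necklace `F_{2k}`: the vertex `(j, 0)` is `x_{j+1}`, `(j, 1)` is `y_{j+1}`,
`(j, 2)` is `z_{j+1}`; each triple `{x,y,z}` with the same first coordinate is a triangle,
and the triangles are linked by the edges `x_{2i-1}x_{2i}`, `y_{2i-1}y_{2i}` and
`z_{2i}z_{2i+1}` (indices modulo `2k`). -/
def triangleNecklace (k : ℕ) : SimpleGraph (ZMod (2 * k) × Fin 3) :=
  SimpleGraph.fromRel (fun x y =>
    (x.1 = y.1 ∧ x.2 ≠ y.2)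
    ∨ (y.1 = x.1 + 1 ∧ Even x.1.val ∧ ((x.2 = 0 ∧ y.2 = 0) ∨ (x.2 = 1 ∧ y.2 = 1)))
    ∨ (y.1 = x.1 + 1 ∧ Odd x.1.val ∧ x.2 = 2 ∧ y.2 = 2))

/-!
Every vertex of a unit has two neighbours inside it, hence at most one outside. So a unit
without an initially blue vertex never turns blue, and if no unit contains two blue vertices,
every blue vertex has two white neighbours and nothing ever spreads: this gives the lower bound.
For the upper bound, fill one unit `W₀` completely (three vertices suffice) and, in every other
unit, colour one neighbour inside the unit of the vertex closest to a root in `W₀`. Processing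
the units by this distance, the predecessor of that closest vertex lies in a unit that is already
blue and so has at most one white neighbour; this starts a cascade that fills the next unit.
-/

lemma SimpleGraph.Reachable.exists_adj_dist_add_one {G : SimpleGraph V} {u v : V}
    (h : G.Reachable u v) (hne : u ≠ v) : ∃ w, G.Adj w v ∧ G.dist u w + 1 = G.dist u v := by
  obtain ⟨p, hp⟩ := h.symm.exists_walk_length_eq_dist
  cases p with
  | nil => exact absurd rfl hne
  | cons hadj q =>
    refine ⟨_, hadj.symm, ?_⟩
    have hle : G.dist u _ ≤ q.length := dist_comm.trans_le (dist_le q)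
    have hpos := h.pos_dist_of_ne hne
    rw [Walk.length_cons, dist_comm] at hp
    rcases hadj.symm.diff_dist_adj (u := u) with h' | h' | h' <;> omega

section Spreading

variable {G : SimpleGraph V} {p : ℕ} {q : ℕ∞} {B S W : Set V}

lemma subset_spreadStep (B : Set V) : B ⊆ spreadStep G p q B := subset_union_left

lemma subset_iterate_spreadStep (n : ℕ) (B : Set V) : B ⊆ (spreadStep G p q)^[n] B :=
  Function.id_le_iterate_of_id_le (fun _ => subset_spreadStep _) n B

lemma exists_spreadStep_iterate_eq_self [Finite V] (G : SimpleGraph V) (p : ℕ) (q : ℕ∞)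
    (S : Set V) :
    ∃ n, spreadStep G p q ((spreadStep G p q)^[n] S) = (spreadStep G p q)^[n] S := by
  obtain ⟨n, hn⟩ := WellFoundedGT.monotone_chain_condition
    ⟨fun m => (spreadStep G p q)^[m] S,
      fun _ _ h => Function.monotone_iterate_of_id_le (fun _ => subset_spreadStep _) h S⟩
  refine ⟨n, ?_⟩
  rw [← Function.iterate_succ_apply' (spreadStep G p q)]
  exact (hn (n + 1) n.le_succ).symm

lemma IsSpreadingSet.eq_univ_of_spreadStep_eq_self (hS : IsSpreadingSet G p q S)
    (hfix : spreadStep G p q S = S) : S = univ := by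
  obtain ⟨n, hn⟩ := hS
  rwa [Function.iterate_fixed hfix] at hn

lemma spreadStep_eq_self_of_forall_lt_ncard (h : ∀ u ∈ B, q < (G.neighborSet u \ B).ncard) :
    spreadStep G p q B = B :=
  union_eq_left.2 fun _ ⟨_, u, ⟨_, hu⟩, hle⟩ => ((h u hu).not_ge hle).elim

lemma disjoint_iterate_spreadStep [Finite V] (hW : ∀ x ∈ W, (G.neighborSet x \ W).ncard < p)
    (hB : Disjoint B W) (n : ℕ) : Disjoint ((spreadStep G p q)^[n] B) W := by
  induction n with
  | zero => exact hB
  | succ n ih =>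
    rw [Function.iterate_succ_apply']
    refine disjoint_union_left.2 ⟨ih, disjoint_left.2 fun x ⟨hx, _⟩ hxW => ?_⟩
    have hsub : G.neighborSet x ∩ (spreadStep G p q)^[n] B ⊆ G.neighborSet x \ W :=
      fun y ⟨hy, hyB⟩ => ⟨hy, disjoint_left.1 ih hyB⟩
    exact (hx.trans (ncard_le_ncard hsub)).not_gt (hW x hxW)

lemma IsSpreadingSet.inter_nonempty [Finite V] (hS : IsSpreadingSet G p q S)
    (hW : ∀ x ∈ W, (G.neighborSet x \ W).ncard < p) (hWne : W.Nonempty) : (S ∩ W).Nonempty := by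
  obtain ⟨n, hn⟩ := hS
  by_contra h
  have := disjoint_iterate_spreadStep (q := q) hW
    (disjoint_iff_inter_eq_empty.2 (not_nonempty_iff_eq_empty.1 h)) n
  rw [hn, univ_disjoint] at this
  exact hWne.ne_empty this

lemma ncard_neighborSet_diff_le_one [Finite V] {v : V} (hv : (G.neighborSet v).ncard = 3)
    (h : 1 < (G.neighborSet v ∩ W).ncard) : (G.neighborSet v \ W).ncard ≤ 1 := by
  have := ncard_inter_add_ncard_sdiff_eq_ncard (G.neighborSet v) W
  omega

lemma neighborSet_subset_of_two_lt_ncard [Finite V] {v : V} (hv : (G.neighborSet v).ncard = 3)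
    (h : 2 < (G.neighborSet v ∩ W).ncard) : G.neighborSet v ⊆ W := by
  have := ncard_inter_add_ncard_sdiff_eq_ncard (G.neighborSet v) W
  exact sdiff_eq_empty.1 ((ncard_eq_zero).1 (by omega))

lemma mem_of_spreadStep_subset [Finite V] (hB : spreadStep G 2 1 B ⊆ B) {w u v : V}
    (hu : (G.neighborSet u).ncard = 3) (hu2 : 1 < (G.neighborSet u ∩ B).ncard)
    (hwu : G.Adj w u) (hwv : G.Adj w v) (huv : u ≠ v) (huB : u ∈ B) (hvB : v ∈ B) : w ∈ B :=
  hB (Or.inr ⟨(one_lt_ncard_iff (toFinite _)).2 ⟨u, v, ⟨hwu, huB⟩, ⟨hwv, hvB⟩, huv⟩,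
    u, ⟨hwu, huB⟩, by exact_mod_cast ncard_neighborSet_diff_le_one hu hu2⟩)

end Spreading

section Units

lemma ncard_triple_le (a b c : V) : ({a, b, c} : Set V).ncard ≤ 3 :=
  (ncard_insert_le _ _).trans (Nat.succ_le_succ ((ncard_insert_le _ _).trans_eq (by simp)))

variable {G : SimpleGraph V} {B W : Set V}

lemma nonempty_of_isTriangle_or_isDiamond (hW : IsTriangle G W ∨ IsDiamond G W) : W.Nonempty := by
  rcases hW with ⟨a, -, -, -, -, -, -, -, -, rfl⟩ |
    ⟨a, -, -, -, -, -, -, -, -, -, -, -, -, -, -, -, rfl⟩ <;> exact ⟨a, by simp⟩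

lemma one_lt_ncard_neighborSet_inter [Finite V] (hW : IsTriangle G W ∨ IsDiamond G W) {v : V}
    (hv : v ∈ W) : 1 < (G.neighborSet v ∩ W).ncard := by
  refine (one_lt_ncard_iff (toFinite _)).2 ?_
  simp only [mem_inter_iff, mem_neighborSet]
  rcases hW with ⟨a, b, c, hab, hac, hbc, h₁, h₂, h₃, rfl⟩ |
    ⟨a, b, c, d, hab, -, -, -, -, hcd, -, h₁, h₂, h₃, h₄, h₅, rfl⟩
  · rcases hv with rfl | rfl | rfl
    · exact ⟨b, c, ⟨h₁, by simp⟩, ⟨h₂, by simp⟩, hbc⟩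
    · exact ⟨a, c, ⟨h₁.symm, by simp⟩, ⟨h₃, by simp⟩, hac⟩
    · exact ⟨a, b, ⟨h₂.symm, by simp⟩, ⟨h₃.symm, by simp⟩, hab⟩
  · rcases hv with rfl | rfl | rfl | rfl
    · exact ⟨c, d, ⟨h₁, by simp⟩, ⟨h₂, by simp⟩, hcd⟩
    · exact ⟨c, d, ⟨h₃, by simp⟩, ⟨h₄, by simp⟩, hcd⟩
    · exact ⟨a, b, ⟨h₁.symm, by simp⟩, ⟨h₃.symm, by simp⟩, hab⟩
    · exact ⟨a, b, ⟨h₂.symm, by simp⟩, ⟨h₄.symm, by simp⟩, hab⟩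

lemma IsTriangle.exists_eq_insert_of_adj (hT : IsTriangle G W) {e s : V} (he : e ∈ W)
    (hs : s ∈ W) (hes : G.Adj e s) : ∃ x, G.Adj e x ∧ G.Adj s x ∧ W = {e, s, x} := by
  obtain ⟨a, b, c, -, -, -, hab, hac, hbc, rfl⟩ := hT
  simp only [mem_insert_iff, mem_singleton_iff] at he hs
  rcases he with rfl | rfl | rfl <;> rcases hs with rfl | rfl | rfl
  any_goals exact absurd hes G.irrefl
  exacts [⟨c, hac, hbc, rfl⟩, ⟨b, hab, hbc.symm, by grind⟩, ⟨c, hbc, hac, by grind⟩,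
    ⟨a, hab.symm, hac.symm, by grind⟩, ⟨b, hbc.symm, hab, by grind⟩,
    ⟨a, hac.symm, hab.symm, by grind⟩]

/-- In a cubic graph, a diamond vertex `e` with a neighbour outside the diamond is one of the two
non-adjacent tips. -/
lemma IsDiamond.exists_eq_insert_of_adj [Finite V] (hD : IsDiamond G W) {e s t : V}
    (he3 : (G.neighborSet e).ncard = 3) (he : e ∈ W) (hs : s ∈ W) (hes : G.Adj e s)
    (het : G.Adj e t) (htW : t ∉ W) :
    ∃ b x, G.Adj e x ∧ G.Adj s x ∧ G.Adj b s ∧ G.Adj b x ∧ W = {e, b, s, x} := by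
  have hout : ¬ G.neighborSet e ⊆ W := fun h => htW (h het)
  obtain ⟨a, b, c, d, hab, hac, had, hbc, hbd, hcd, hnab, hac', had', hbc', hbd', hcd', rfl⟩ := hD
  simp only [mem_insert_iff, mem_singleton_iff] at he hs
  rcases he with rfl | rfl | rfl | rfl
  · rcases hs with rfl | rfl | rfl | rfl
    · exact absurd hes G.irrefl
    · exact absurd hes hnab
    · exact ⟨b, d, had', hcd', hbc', hbd', rfl⟩
    · exact ⟨b, c, hac', hcd'.symm, hbd', hbc', by grind⟩
  · rcases hs with rfl | rfl | rfl | rfl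
    · exact absurd hes.symm hnab
    · exact absurd hes G.irrefl
    · exact ⟨a, d, hbd', hcd', hac', had', by grind⟩
    · exact ⟨a, c, hbc', hcd'.symm, had', hac', by grind⟩
  · refine absurd (neighborSet_subset_of_two_lt_ncard he3 ((two_lt_ncard_iff (toFinite _)).2
      ⟨a, b, d, ⟨hac'.symm, by simp⟩, ⟨hbc'.symm, by simp⟩, ⟨hcd', by simp⟩, hab, had, hbd⟩)) hout
  · refine absurd (neighborSet_subset_of_two_lt_ncard he3 ((two_lt_ncard_iff (toFinite _)).2
      ⟨a, b, c, ⟨had'.symm, by simp⟩, ⟨hbd'.symm, by simp⟩, ⟨hcd'.symm, by simp⟩, hab, hac, hbc⟩))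
      hout

variable [Finite V] (hcub : ∀ v : V, (G.neighborSet v).ncard = 3)
include hcub

lemma subset_of_spreadStep_subset_of_adj (hB : spreadStep G 2 1 B ⊆ B)
    (hW : IsTriangle G W ∨ IsDiamond G W) {e s t : V} (he : e ∈ W) (hs : s ∈ W)
    (hes : G.Adj e s) (het : G.Adj e t) (htW : t ∉ W) (hsB : s ∈ B) (htB : t ∈ B)
    (ht2 : 1 < (G.neighborSet t ∩ B).ncard) : W ⊆ B := by
  have hts : t ≠ s := fun h => htW (h ▸ hs)
  have heB : e ∈ B := mem_of_spreadStep_subset hB (hcub t) ht2 het hes hts htB hsB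
  have he2 : 1 < (G.neighborSet e ∩ B).ncard :=
    (one_lt_ncard_iff (toFinite _)).2 ⟨t, s, ⟨het, htB⟩, ⟨hes, hsB⟩, hts⟩
  rcases hW with hT | hD
  · obtain ⟨x, hex, hsx, rfl⟩ := hT.exists_eq_insert_of_adj he hs hes
    have hxB := mem_of_spreadStep_subset hB (hcub e) he2 hex.symm hsx.symm hes.ne heB hsB
    simp [insert_subset_iff, heB, hsB, hxB]
  · obtain ⟨b, x, hex, hsx, hbs, hbx, rfl⟩ :=
      hD.exists_eq_insert_of_adj (hcub e) he hs hes het htW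
    have hxB := mem_of_spreadStep_subset hB (hcub e) he2 hex.symm hsx.symm hes.ne heB hsB
    have hx2 : 1 < (G.neighborSet x ∩ B).ncard :=
      (one_lt_ncard_iff (toFinite _)).2 ⟨e, s, ⟨hex.symm, heB⟩, ⟨hsx.symm, hsB⟩, hes.ne⟩
    have hbB := mem_of_spreadStep_subset hB (hcub x) hx2 hbx hbs hsx.ne' hxB hsB
    simp [insert_subset_iff, heB, hsB, hxB, hbB]

lemma exists_ncard_le_three_forall_subset (hW : IsTriangle G W ∨ IsDiamond G W) :
    ∃ B₀ : Set V, B₀.ncard ≤ 3 ∧ ∀ B, spreadStep G 2 1 B ⊆ B → B₀ ⊆ B → W ⊆ B := by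
  rcases hW with ⟨a, b, c, -, -, -, -, -, -, rfl⟩ |
    ⟨a, b, c, d, -, -, -, -, hbd, hcd, -, hac, had, hbc, -, hcd', rfl⟩
  · exact ⟨_, ncard_triple_le _ _ _, fun _ _ h => h⟩
  · refine ⟨{b, c, d}, ncard_triple_le _ _ _, fun B hB hB₀ => ?_⟩
    rw [insert_subset_iff]
    refine ⟨mem_of_spreadStep_subset hB (hcub c) ?_ hac had hcd (hB₀ (by simp)) (hB₀ (by simp)),
      hB₀⟩
    exact (one_lt_ncard_iff (toFinite _)).2
      ⟨b, d, ⟨hbc.symm, hB₀ (by simp)⟩, ⟨hcd', hB₀ (by simp)⟩, hbd⟩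

end Units

lemma ncard_add_one_le_of_forall_inter_nonempty {α : Type*} [Finite α] {P : Set (Set α)}
    (hP : ∀ v, ∃! W, W ∈ P ∧ v ∈ W) {S : Set α} (hmeet : ∀ W ∈ P, (S ∩ W).Nonempty)
    (htwo : ∃ W ∈ P, (S ∩ W).Nontrivial) : P.ncard + 1 ≤ S.ncard := by
  choose part hpart using fun v => (hP v).exists
  have himage : part '' S = P := by
    refine Subset.antisymm (image_subset_iff.2 fun v _ => (hpart v).1) fun W hW => ?_
    obtain ⟨v, hvS, hvW⟩ := hmeet W hW
    exact ⟨v, hvS, (hP v).unique (hpart v) ⟨hW, hvW⟩⟩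
  have hninj : ¬ InjOn part S := by
    obtain ⟨W, hW, x, ⟨hxS, hxW⟩, y, ⟨hyS, hyW⟩, hxy⟩ := htwo
    exact fun h => hxy (h hxS hyS (((hP x).unique (hpart x) ⟨hW, hxW⟩).trans
      ((hP y).unique (hpart y) ⟨hW, hyW⟩).symm))
  rw [← himage]
  exact (ncard_image_le (toFinite _)).lt_of_ne (mt (ncard_image_iff (toFinite _)).1 hninj)

namespace IsTDPartition

variable {G : SimpleGraph V} {P : Set (Set V)} [Finite V] (hP : IsTDPartition G P)
  (hcub : ∀ v : V, (G.neighborSet v).ncard = 3)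
include hP hcub

theorem ncard_add_one_le_of_isSpreadingSet [Nonempty V] {S : Set V}
    (hS : IsSpreadingSet G 2 1 S) : P.ncard + 1 ≤ S.ncard := by
  have hinside : ∀ W ∈ P, ∀ v ∈ W, 1 < (G.neighborSet v ∩ W).ncard :=
    fun W hW _ hv => one_lt_ncard_neighborSet_inter (hP.1 W hW) hv
  refine ncard_add_one_le_of_forall_inter_nonempty hP.2 (fun W hW => hS.inter_nonempty
    (fun x hx => Nat.lt_succ_of_le (ncard_neighborSet_diff_le_one (hcub x) (hinside W hW x hx)))
    (nonempty_of_isTriangle_or_isDiamond (hP.1 W hW))) ?_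
  by_contra! hsub
  have hfix : spreadStep G 2 1 S = S := by
    refine spreadStep_eq_self_of_forall_lt_ncard fun u hu => ?_
    obtain ⟨W, hW, huW⟩ := (hP.2 u).exists
    have hwhite : G.neighborSet u ∩ W ⊆ G.neighborSet u \ S := fun y ⟨hy, hyW⟩ =>
      ⟨hy, fun hyS => G.irrefl (hsub W hW ⟨hyS, hyW⟩ ⟨hu, huW⟩ ▸ hy)⟩
    exact_mod_cast (hinside W hW u huW).trans_le (ncard_le_ncard hwhite)
  obtain ⟨W, hW, hvW⟩ := (hP.2 (Classical.arbitrary V)).exists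
  obtain ⟨x, y, ⟨-, hx⟩, ⟨-, hy⟩, hxy⟩ :=
    (one_lt_ncard_iff (toFinite _)).1 (hinside W hW _ hvW)
  rw [hS.eq_univ_of_spreadStep_eq_self hfix] at hsub
  exact hxy (hsub W hW ⟨trivial, hx⟩ ⟨trivial, hy⟩)

theorem subset_of_spreadStep_subset (hconn : G.Connected) {B : Set V}
    (hB : spreadStep G 2 1 B ⊆ B) {r : V} {W₀ : Set V} (hW₀ : W₀ ∈ P) (hr : r ∈ W₀)
    (hW₀B : W₀ ⊆ B) {entry : Set V → V}
    (hentry : ∀ W ∈ P, entry W ∈ W ∧ ∀ w ∈ W, G.dist r (entry W) ≤ G.dist r w)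
    (hseed : ∀ W ∈ P, W ≠ W₀ → ∃ s ∈ W ∩ B, G.Adj (entry W) s) {W : Set V} (hW : W ∈ P) :
    W ⊆ B := by
  induction hd : G.dist r (entry W) using Nat.strong_induction_on generalizing W with
  | _ n ih =>
  by_cases hW₀' : W = W₀
  · exact hW₀' ▸ hW₀B
  obtain ⟨he, hmin⟩ := hentry W hW
  have hre : r ≠ entry W := fun h => hW₀' ((hP.2 r).unique ⟨hW, h ▸ he⟩ ⟨hW₀, hr⟩)
  obtain ⟨t, hte, htd⟩ := (hconn r (entry W)).exists_adj_dist_add_one hre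
  have htW : t ∉ W := fun htW => by have := hmin t htW; omega
  obtain ⟨W', hW', htW'⟩ := (hP.2 t).exists
  have hW'B : W' ⊆ B := ih _ (by have := (hentry W' hW').2 t htW'; omega) hW' rfl
  obtain ⟨s, ⟨hsW, hsB⟩, hes⟩ := hseed W hW hW₀'
  refine subset_of_spreadStep_subset_of_adj hcub hB (hP.1 W hW) he hsW hes hte.symm htW hsB
    (hW'B htW') ?_
  exact (one_lt_ncard_neighborSet_inter (hP.1 W' hW') htW').trans_le
    (ncard_le_ncard (inter_subset_inter_right _ hW'B))

theorem exists_isSpreadingSet_ncard_le (hconn : G.Connected) :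
    ∃ S, IsSpreadingSet G 2 1 S ∧ S.ncard ≤ P.ncard + 2 := by
  obtain ⟨r⟩ := hconn.nonempty
  have : Nonempty V := ⟨r⟩
  obtain ⟨W₀, hW₀, hr⟩ := (hP.2 r).exists
  choose! entry hentry hentry_min using fun W (hW : W ∈ P) => exists_min_image W (G.dist r)
    (toFinite W) (nonempty_of_isTriangle_or_isDiamond (hP.1 W hW))
  choose! seed hseed_adj hseed using fun W (hW : W ∈ P) => nonempty_of_ncard_ne_zero
    (Nat.zero_lt_of_lt (one_lt_ncard_neighborSet_inter (hP.1 W hW) (hentry W hW))).ne'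
  obtain ⟨B₀, hB₀card, hB₀⟩ := exists_ncard_le_three_forall_subset hcub (hP.1 W₀ hW₀)
  let S := B₀ ∪ seed '' (P \ {W₀})
  obtain ⟨n, hn⟩ := exists_spreadStep_iterate_eq_self G 2 1 S
  have hSB : S ⊆ (spreadStep G 2 1)^[n] S := subset_iterate_spreadStep n S
  refine ⟨S, ⟨n, eq_univ_of_forall fun v => ?_⟩, ?_⟩
  · obtain ⟨W, hW, hv⟩ := (hP.2 v).exists
    refine hP.subset_of_spreadStep_subset hcub hconn hn.le hW₀ hr
      (hB₀ _ hn.le (subset_union_left.trans hSB)) (fun W hW => ⟨hentry W hW, hentry_min W hW⟩)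
      (fun W hW hne => ⟨seed W, ⟨hseed W hW, hSB (Or.inr ⟨W, ⟨hW, hne⟩, rfl⟩)⟩, hseed_adj W hW⟩)
      hW hv
  · calc S.ncard ≤ B₀.ncard + (seed '' (P \ {W₀})).ncard := ncard_union_le _ _
      _ ≤ 3 + (P.ncard - 1) := add_le_add hB₀card
          ((ncard_image_le (toFinite _)).trans (ncard_sdiff_singleton_of_mem hW₀).le)
      _ ≤ P.ncard + 2 := by
          have := (ncard_pos (toFinite P)).2 ⟨W₀, hW₀⟩
          omega

end IsTDPartition

theorem stmt17_general {V : Type*} [Fintype V] (G : SimpleGraph V)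
    (hconn : G.Connected)
    (hcub : ∀ v : V, (G.neighborSet v).ncard = 3)
    (P : Set (Set V)) (hP : IsTDPartition G P) :
    P.ncard + 1 ≤ spreadNumber G 2 1 ∧ spreadNumber G 2 1 ≤ P.ncard + 2 := by
  have : Nonempty V := hconn.nonempty
  obtain ⟨S, hS, hScard⟩ := hP.exists_isSpreadingSet_ncard_le hcub hconn
  have hS' : S.ncard ∈ {k | ∃ T : Set V, T.ncard = k ∧ IsSpreadingSet G 2 1 T} := ⟨S, rfl, hS⟩
  refine ⟨le_csInf ⟨_, hS'⟩ ?_, (Nat.sInf_le hS').trans hScard⟩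
  rintro _ ⟨T, rfl, hT⟩
  exact hP.ncard_add_one_le_of_isSpreadingSet hcub hT

theorem stmt17 {V : Type*} [Fintype V] (G : SimpleGraph V)
    (hconn : G.Connected) (hcf : ClawFree G)
    (hcub : ∀ v : V, (G.neighborSet v).ncard = 3)
    (hK4 : ¬ Nonempty (G ≃g (⊤ : SimpleGraph (Fin 4))))
    (P : Set (Set V)) (hP : IsTDPartition G P) :
    P.ncard + 1 ≤ spreadNumber G 2 1 ∧ spreadNumber G 2 1 ≤ P.ncard + 2 :=
  stmt17_general G hconn hcub P hP
end

section
/- For every k ≥ 1, the triangle-necklace F_{2k} on n = 6k vertices satisfies α(F_{2k}) = 2k and m(F_{2k}, 3) = 4k. -/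
open SimpleGraph Set

variable {V : Type*}

/-!
In an `r`-regular graph a vertex with a white neighbour has fewer than `r` blue neighbours, so an
edge with both ends white stays white forever; conversely, if the white vertices are independent,
each of them has all `r` neighbours blue and turns blue at once. Hence the `r`-percolating sets are
exactly the complements of independent sets, and `m(G, r) = |V| - α(G)`. For the cubic graph
`F_{2k}`, an independent set meets each of the `2k` triangles at most once, and since the linking
edges join triangles of opposite parity without changing the letter, taking `x` from the even
triangles and `y` from the odd ones gives an independent set of size `2k`.
-/

theorem IsIndep.injOn {ι : Type*} {G : SimpleGraph V} {f : V → ι}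
    (hf : ∀ u v, f u = f v → u ≠ v → G.Adj u v) {I : Set V} (hI : IsIndep G I) :
    Set.InjOn f I :=
  fun u hu v hv huv => by_contra fun hne => hI hu hv hne (hf u v huv hne)

theorem IsIndep.ncard_le_card {ι : Type*} [Finite ι] {G : SimpleGraph V} {f : V → ι}
    (hf : ∀ u v, f u = f v → u ≠ v → G.Adj u v) {I : Set V} (hI : IsIndep G I) :
    I.ncard ≤ Nat.card ι := by
  rw [← Set.ncard_univ]
  exact Set.ncard_le_ncard_of_injOn f (fun _ _ => Set.mem_univ _) (hI.injOn hf)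

namespace SimpleGraph

variable {G : SimpleGraph V} [G.LocallyFinite] {r : ℕ}

theorem ncard_neighborSet_eq_degree (v : V) : (G.neighborSet v).ncard = G.degree v := by
  rw [← Nat.card_coe_set_eq, Nat.card_eq_fintype_card, card_neighborSet_eq_degree]

theorem IsRegularOfDegree.ncard_neighborSet (hG : G.IsRegularOfDegree r) (v : V) :
    (G.neighborSet v).ncard = r := by
  rw [ncard_neighborSet_eq_degree, hG v]

theorem IsRegularOfDegree.ncard_neighborSet_inter_lt (hG : G.IsRegularOfDegree r)
    {B : Set V} {w x : V} (hwx : G.Adj w x) (hx : x ∉ B) :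
    (G.neighborSet w ∩ B).ncard < r := by
  calc (G.neighborSet w ∩ B).ncard ≤ (G.neighborSet w \ {x}).ncard :=
        Set.ncard_le_ncard (fun y hy => ⟨hy.1, fun h => hx (h ▸ hy.2)⟩) (Set.toFinite _)
    _ < (G.neighborSet w).ncard := Set.ncard_sdiff_singleton_lt_of_mem hwx (Set.toFinite _)
    _ = r := hG.ncard_neighborSet w

theorem IsRegularOfDegree.notMem_percStep_iterate (hG : G.IsRegularOfDegree r)
    {S : Set V} {u v : V} (huv : G.Adj u v) (hu : u ∉ S) (hv : v ∉ S) (n : ℕ) :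
    u ∉ (percStep G r)^[n] S ∧ v ∉ (percStep G r)^[n] S := by
  induction n with
  | zero => exact ⟨hu, hv⟩
  | succ n ih =>
    simp only [Function.iterate_succ_apply', percStep, Set.mem_union, Set.mem_ofPred_eq, not_or,
      not_le]
    exact ⟨⟨ih.1, hG.ncard_neighborSet_inter_lt huv ih.2⟩,
      ⟨ih.2, hG.ncard_neighborSet_inter_lt huv.symm ih.1⟩⟩

theorem IsRegularOfDegree.percStep_eq_univ (hG : G.IsRegularOfDegree r) {S : Set V}
    (hS : IsIndep G Sᶜ) : percStep G r S = Set.univ := by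
  refine Set.eq_univ_of_forall fun w => ?_
  by_cases hw : w ∈ S
  · exact Or.inl hw
  · have hN : G.neighborSet w ⊆ S := fun x hx => by
      by_contra hxS
      exact hS hw hxS (G.ne_of_adj hx) hx
    exact Or.inr (by rw [Set.mem_ofPred_eq, Set.inter_eq_self_of_subset_left hN,
      hG.ncard_neighborSet])

theorem IsRegularOfDegree.isPercolating_iff (hG : G.IsRegularOfDegree r) (S : Set V) :
    IsPercolating G r S ↔ IsIndep G Sᶜ := by
  constructor
  · rintro ⟨n, hn⟩ u hu v hv - huv
    exact (hG.notMem_percStep_iterate huv hu hv n).1 (hn ▸ Set.mem_univ u)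
  · exact fun hS => ⟨1, hG.percStep_eq_univ hS⟩

theorem IsRegularOfDegree.percNumber_add_indepNumber [Finite V] (hG : G.IsRegularOfDegree r) :
    percNumber G r + indepNumber G = Nat.card V := by
  have hbdd : BddAbove {k | ∃ I : Set V, I.ncard = k ∧ IsIndep G I} :=
    ⟨Nat.card V, by rintro _ ⟨I, rfl, -⟩; exact I.ncard_le_card⟩
  obtain ⟨I, hIcard, hI⟩ : indepNumber G ∈ {k | ∃ I : Set V, I.ncard = k ∧ IsIndep G I} :=
    Nat.sSup_mem ⟨0, ∅, Set.ncard_empty V, Set.pairwise_empty _⟩ hbdd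
  have hleast : IsLeast {k | ∃ S : Set V, S.ncard = k ∧ IsPercolating G r S}
      (Nat.card V - indepNumber G) := by
    refine ⟨⟨Iᶜ, ?_, (hG.isPercolating_iff _).mpr (by rwa [compl_compl])⟩, ?_⟩
    · have := Set.ncard_add_ncard_compl I; omega
    · rintro _ ⟨S, rfl, hS⟩
      have : Sᶜ.ncard ≤ indepNumber G :=
        le_csSup hbdd ⟨Sᶜ, rfl, (hG.isPercolating_iff S).mp hS⟩
      have := Set.ncard_add_ncard_compl S
      omega
  rw [percNumber, hleast.csInf_eq, Nat.sub_add_cancel (hIcard ▸ I.ncard_le_card)]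

end SimpleGraph

section TriangleNecklace

variable {k : ℕ} [NeZero k]

instance : Fact (1 < 2 * k) := ⟨by have := NeZero.ne k; omega⟩

theorem ZMod.even_val_add_one (j : ZMod (2 * k)) : Even (j + 1).val ↔ ¬Even j.val := by
  rw [ZMod.val_add, ZMod.val_one, Nat.even_iff, Nat.mod_mod_of_dvd _ ⟨k, rfl⟩, Nat.even_iff]
  omega

theorem ZMod.even_val_sub_one (j : ZMod (2 * k)) : Even (j - 1).val ↔ ¬Even j.val := by
  rw [← not_iff_not, ← ZMod.even_val_add_one, sub_add_cancel, not_not]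

/-- The triangle containing the neighbour of `(j, t)` outside its own triangle. -/
def triangleNecklace.link (j : ZMod (2 * k)) (t : Fin 3) : ZMod (2 * k) :=
  if (Even j.val ↔ t ≠ 2) then j + 1 else j - 1

theorem triangleNecklace.link_ne (j : ZMod (2 * k)) (t : Fin 3) : link j t ≠ j := by
  unfold link; split_ifs <;> simp

theorem triangleNecklace_adj_iff (j j' : ZMod (2 * k)) (t t' : Fin 3) :
    (triangleNecklace k).Adj (j, t) (j', t') ↔
      (j' = j ∧ t' ≠ t) ∨ (t' = t ∧ j' = triangleNecklace.link j t) := by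
  have hfwd : ∀ (i i' : ZMod (2 * k)) (s s' : Fin 3),
      (i' = i + 1 ∧ Even i.val ∧ (s = 0 ∧ s' = 0 ∨ s = 1 ∧ s' = 1) ∨
        i' = i + 1 ∧ Odd i.val ∧ s = 2 ∧ s' = 2) ↔
      s' = s ∧ i' = i + 1 ∧ (Even i.val ↔ s ≠ 2) := by
    intro i i' s s'
    rw [← Nat.not_even_iff_odd]
    fin_cases s <;> fin_cases s' <;> simp
  have hbwd :
      j = j' + 1 ∧ (Even j'.val ↔ t ≠ 2) ↔ j' = j - 1 ∧ ¬(Even j.val ↔ t ≠ 2) := by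
    constructor
    · rintro ⟨rfl, h⟩; simp [ZMod.even_val_add_one, h]
    · rintro ⟨rfl, h⟩; simp only [sub_add_cancel, ZMod.even_val_sub_one, true_and]; tauto
  by_cases hj : j' = j
  · subst hj
    have := triangleNecklace.link_ne j' t
    simp [triangleNecklace, fromRel_adj, eq_comm (a := t), Ne.symm this]
  · simp only [triangleNecklace, fromRel_adj, hfwd, ne_eq, Prod.mk.injEq, hj, Ne.symm hj,
      false_and, false_or, not_false_eq_true, true_and, triangleNecklace.link, eq_ite_iff]
    rcases eq_or_ne t' t with rfl | ht
    · simp only [true_and, hbwd]; tauto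
    · simp [ht, Ne.symm ht]

theorem triangleNecklace_neighborSet (j : ZMod (2 * k)) (t : Fin 3) :
    (triangleNecklace k).neighborSet (j, t) =
      {(j, t + 1), (j, t + 2), (triangleNecklace.link j t, t)} := by
  ext ⟨j', t'⟩
  have hother : t' ≠ t ↔ t' = t + 1 ∨ t' = t + 2 := by revert t t'; decide
  simp only [mem_neighborSet, triangleNecklace_adj_iff, hother, Set.mem_insert_iff,
    Set.mem_singleton_iff, Prod.mk.injEq]
  tauto

theorem triangleNecklace_isRegularOfDegree [(triangleNecklace k).LocallyFinite] :
    (triangleNecklace k).IsRegularOfDegree 3 := by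
  rintro ⟨j, t⟩
  rw [← ncard_neighborSet_eq_degree, triangleNecklace_neighborSet, Set.ncard_eq_three]
  have h12 : t + 1 ≠ t + 2 := by revert t; decide
  have hlink := triangleNecklace.link_ne j t
  refine ⟨_, _, _, ?_, ?_, ?_, rfl⟩ <;> simp [h12, Ne.symm hlink]

theorem triangleNecklace.even_val_link (j : ZMod (2 * k)) (t : Fin 3) :
    Even (link j t).val ↔ ¬Even j.val := by
  unfold link; split_ifs
  exacts [ZMod.even_val_add_one j, ZMod.even_val_sub_one j]

theorem triangleNecklace_indepNumber : indepNumber (triangleNecklace k) = 2 * k := by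
  have hfst :
      ∀ u v : ZMod (2 * k) × Fin 3, u.1 = v.1 → u ≠ v → (triangleNecklace k).Adj u v := by
    rintro ⟨j, t⟩ ⟨j', t'⟩ (rfl : j = j') hne
    exact (triangleNecklace_adj_iff _ _ _ _).2 (Or.inl ⟨rfl, fun h => hne (h ▸ rfl)⟩)
  let pick : ZMod (2 * k) → Fin 3 := fun j => if Even j.val then 0 else 1
  refine IsGreatest.csSup_eq ⟨⟨Set.range fun j => (j, pick j), ?_, ?_⟩, ?_⟩
  · rw [← Set.image_univ, Set.ncard_image_of_injective _ fun _ _ h => congrArg Prod.fst h,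
      Set.ncard_univ, Nat.card_zmod]
  · rintro _ ⟨j, rfl⟩ _ ⟨j', rfl⟩ hne hadj
    rcases (triangleNecklace_adj_iff _ _ _ _).1 hadj with ⟨rfl, -⟩ | ⟨ht, rfl⟩
    · exact hne rfl
    · revert ht
      by_cases he : Even j.val <;> simp [pick, he, triangleNecklace.even_val_link]
  · rintro _ ⟨I, rfl, hI⟩
    simpa using hI.ncard_le_card hfst

end TriangleNecklace

theorem stmt19 (k : ℕ) (hk : 1 ≤ k) :
    indepNumber (triangleNecklace k) = 2 * k ∧
    percNumber (triangleNecklace k) 3 = 4 * k := by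
  have : NeZero k := ⟨by omega⟩
  classical
  have hsum := (triangleNecklace_isRegularOfDegree (k := k)).percNumber_add_indepNumber
  have hcard : Nat.card (ZMod (2 * k) × Fin 3) = 6 * k := by
    rw [Nat.card_prod, Nat.card_zmod, Nat.card_eq_fintype_card, Fintype.card_fin]; ring
  rw [triangleNecklace_indepNumber, hcard] at hsum
  exact ⟨triangleNecklace_indepNumber, by omega⟩
end
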